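/- arXiv:2401.00803 — 7 statements merged into one kernel-verified Lean document; each statement's English description precedes it below -/
import Mathlib

section
/- Let R be a unique factorization domain of characteristic p > 0 and let a, b ∈ R. Then for every e ≥ 0, (a^{p^e} R : b^{p^e} R) = ((aR : bR))^{[p^e]}, where J^{[p^e]} denotes the ideal generated by the p^e-th powers of elements of J. Equivalently, if (aR : bR) = cR then (a^{p^e} R : b^{p^e} R) = c^{p^e} R. -/
lemma colon_span_reduced {R : Type*} [CommRing R] [IsDomain R] [UniqueFactorizationMonoid R]
    (c a' b' : R) (hc : c ≠ 0) (h : IsRelPrime a' b') :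
    (Ideal.span {c * a'} : Ideal R).colon (Ideal.span {c * b'}) = Ideal.span {a'} := by
  ext x
  rw [Ideal.mem_colon_span_singleton, Ideal.mem_span_singleton, Ideal.mem_span_singleton]
  constructor
  · intro hd
    have : a' ∣ x * b' := by
      have h2 : c * a' ∣ c * (x * b') := by
        rw [mul_comm x (c * b'), mul_assoc, mul_comm b' x] at hd
        exact hd
      exact (mul_dvd_mul_iff_left hc).mp h2
    exact h.dvd_of_dvd_mul_right this
  · rintro ⟨y, rfl⟩
    exact ⟨y * b', by ring⟩

/-- In a UFD of characteristic `p > 0`, Frobenius powers commute with colon ideals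
of principal ideals: `(a^{p^e} R : b^{p^e} R) = ((aR : bR))^{[p^e]}`. -/
theorem colon_span_pow_frobenius (R : Type*) [CommRing R] [IsDomain R]
    [UniqueFactorizationMonoid R] (p : ℕ) [Fact p.Prime] [CharP R p]
    (a b : R) (e : ℕ) :
    (Ideal.span {a ^ p ^ e} : Ideal R).colon (Ideal.span {b ^ p ^ e}) =
      Ideal.map (iterateFrobenius R p e)
        ((Ideal.span {a} : Ideal R).colon (Ideal.span {b})) := by
  have hmap : ∀ c : R, Ideal.map (iterateFrobenius R p e) (Ideal.span {c})
      = Ideal.span {c ^ p ^ e} := by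
    intro c
    rw [Ideal.map_span, Set.image_singleton, iterateFrobenius_def]
  rcases eq_or_ne b 0 with rfl | hb
  · have hz : (0:R) ^ p ^ e = 0 := zero_pow (pow_ne_zero _ (Fact.out : p.Prime).ne_zero)
    rw [hz]
    have htop : ∀ I : Ideal R, I.colon (Ideal.span {(0:R)}) = ⊤ := by
      intro I
      rw [eq_top_iff]
      intro x _
      rw [Ideal.mem_colon_span_singleton, mul_zero]
      exact I.zero_mem
    rw [htop, htop, Ideal.map_top]
  rcases eq_or_ne a 0 with rfl | ha
  · have hz : (0:R) ^ p ^ e = 0 := zero_pow (pow_ne_zero _ (Fact.out : p.Prime).ne_zero)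
    rw [hz]
    have hbot : ∀ c : R, c ≠ 0 →
        (Ideal.span {(0:R)}).colon (Ideal.span {c}) = Ideal.span {(0:R)} := by
      intro c hc
      ext x
      rw [Ideal.mem_colon_span_singleton, Ideal.mem_span_singleton, Ideal.mem_span_singleton]
      simp only [zero_dvd_iff, mul_eq_zero]
      tauto
    rw [hbot _ hb, hbot _ (pow_ne_zero _ hb), hmap, hz]
  obtain ⟨a', b', c', hrel, rfl, rfl⟩ :=
    UniqueFactorizationMonoid.exists_reduced_factors a ha b
  have hc' : c' ≠ 0 := fun h => ha (by simp [h])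
  rw [colon_span_reduced c' a' b' hc' hrel, hmap, mul_pow, mul_pow,
    colon_span_reduced (c' ^ p ^ e) (a' ^ p ^ e) (b' ^ p ^ e)
      (pow_ne_zero _ hc') (hrel.pow)]
end

section
/- Let R be a Noetherian unique factorization domain of prime characteristic p > 0. Then the perfection R_perf is a GCD domain: for any a, b ∈ R_perf, the colon ideal (a·R_perf : b·R_perf) is a principal ideal of R_perf. -/
open PerfectClosure

private lemma mk_shift' {R : Type*} [CommRing R] [IsDomain R] (p : ℕ) [Fact p.Prime]
    [CharP R p] (n j : ℕ) (x : R) :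
    mk R p (n, x) = mk R p (n + j, x ^ p ^ j) := by
  rw [PerfectClosure.eq_iff]
  simp only [iterate_frobenius]
  rw [← pow_mul, ← pow_add, add_comm j n]

private lemma colon_aux {R : Type*} [CommRing R] [IsDomain R]
    [UniqueFactorizationMonoid R] (p : ℕ) [Fact p.Prime] [CharP R p]
    (k : ℕ) (X Y : R) (hY : Y ≠ 0) :
    ((Ideal.span {mk R p (k, X)}).colon (Ideal.span {mk R p (k, Y)})).IsPrincipal := by
  classical
  letI : GCDMonoid R := UniqueFactorizationMonoid.toGCDMonoid R
  obtain ⟨X', hX'⟩ := gcd_dvd_left X Y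
  obtain ⟨Y', hY'⟩ := gcd_dvd_right X Y
  set G := gcd X Y with hGdef
  have hG0 : G ≠ 0 := fun h => hY (by rw [hY', h, zero_mul])
  have hass : Associated (G * gcd X' Y') G := by
    have h := (gcd_mul_left' G X' Y').symm
    rwa [← hX', ← hY', ← hGdef] at h
  have hcop : IsRelPrime X' Y' :=
    gcd_isUnit_iff_isRelPrime.mp (isUnit_of_associated_mul hass hG0)
  refine ⟨⟨mk R p (k, X'), le_antisymm ?_ ?_⟩⟩
  · intro c hc
    obtain ⟨⟨m, Z⟩, rfl⟩ := PerfectClosure.mk_surjective (K := R) (p := p) c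
    rw [Ideal.mem_colon_span_singleton, Ideal.mem_span_singleton] at hc
    obtain ⟨d, hd⟩ := hc
    obtain ⟨⟨l, W⟩, rfl⟩ := PerfectClosure.mk_surjective (K := R) (p := p) d
    rw [mk_mul_mk, mk_mul_mk, PerfectClosure.eq_iff] at hd
    simp only [iterate_map_mul, iterate_frobenius, ← pow_mul, ← pow_add] at hd
    rw [hX', hY', mul_pow, mul_pow] at hd
    rw [show m + (k + l) = l + (m + k) from by omega] at hd
    have hd' : Z ^ p ^ (k + (k + l)) * Y' ^ p ^ (l + (m + k))
        = X' ^ p ^ (l + (m + k)) * W ^ p ^ (k + (m + k)) := by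
      apply mul_left_cancel₀ (pow_ne_zero (p ^ (l + (m + k))) hG0)
      linear_combination hd
    have hdvd1 : X' ^ p ^ (l + (m + k)) ∣ Z ^ p ^ (k + (k + l)) :=
      (hcop.pow).dvd_of_dvd_mul_right ⟨W ^ p ^ (k + (m + k)), hd'⟩
    have hdvd2 : X' ^ p ^ m ∣ Z ^ p ^ k := by
      rw [← IsIntegrallyClosed.pow_dvd_pow_iff
        (pow_ne_zero (k + l) (Nat.Prime.ne_zero Fact.out) : (p : ℕ) ^ (k + l) ≠ 0)]
      rw [← pow_mul, ← pow_mul, ← pow_add, ← pow_add]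
      rwa [show l + (m + k) = m + (k + l) from by omega,
        show k + (k + l) = k + (k + l) from rfl] at hdvd1
    obtain ⟨T, hT⟩ := hdvd2
    rw [Ideal.submodule_span_eq, Ideal.mem_span_singleton]
    refine ⟨mk R p (m + k, T), ?_⟩
    rw [mk_mul_mk, PerfectClosure.eq_iff]
    simp only [iterate_map_mul, iterate_frobenius, ← pow_mul, ← pow_add]
    have h2 : Z ^ p ^ (k + (m + k)) = (X' ^ p ^ m * T) ^ p ^ (m + k) := by
      rw [← hT, ← pow_mul, ← pow_add]
    rw [h2, mul_pow, ← pow_mul, ← pow_add]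
    rw [show m + (m + k) = m + k + m from by omega, show m + k = k + m from by omega]
  · rw [Ideal.submodule_span_eq, Ideal.span_le, Set.singleton_subset_iff, SetLike.mem_coe,
      Ideal.mem_colon_span_singleton, Ideal.mem_span_singleton]
    refine ⟨mk R p (k, Y'), ?_⟩
    rw [mk_mul_mk, mk_mul_mk, PerfectClosure.eq_iff]
    simp only [iterate_map_mul, iterate_frobenius, ← pow_mul, ← pow_add]
    rw [← mul_pow, ← mul_pow]
    congr 1
    rw [hX', hY']; ring

/-- The perfection of a Noetherian UFD of prime characteristic is a GCD domain:
the colon ideal of any two principal ideals is principal. -/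
theorem perfectClosure_gcdDomain (R : Type*) [CommRing R] [IsDomain R]
    [IsNoetherianRing R] [UniqueFactorizationMonoid R] (p : ℕ) [Fact p.Prime]
    [CharP R p] (a b : PerfectClosure R p) :
    ((Ideal.span {a} : Ideal (PerfectClosure R p)).colon (Ideal.span {b})).IsPrincipal := by
  by_cases hb : b = 0
  · refine ⟨⟨1, ?_⟩⟩
    rw [Ideal.submodule_span_eq, Ideal.span_singleton_one, eq_top_iff]
    intro c _
    rw [hb, Ideal.mem_colon_span_singleton, mul_zero]
    exact Ideal.zero_mem _
  · obtain ⟨⟨m0, X0⟩, rfl⟩ := PerfectClosure.mk_surjective (K := R) (p := p) a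
    obtain ⟨⟨n0, Y0⟩, rfl⟩ := PerfectClosure.mk_surjective (K := R) (p := p) b
    rw [mk_shift' p m0 n0 X0, mk_shift' p n0 m0 Y0, add_comm n0 m0]
    apply colon_aux
    intro h
    exact hb (by rw [mk_shift' p n0 m0 Y0, add_comm n0 m0, h, mk_zero_right])
end

section
/- Let R be a UFD of characteristic p > 0 with perfection R_perf, and let a, b ∈ R_perf with a^{p^N}, b^{p^N} ∈ R for some N ≥ 0. If c ∈ R generates the colon ideal (a^{p^N} R : b^{p^N} R) in R, then the colon ideal (a·R_perf : b·R_perf) equals the principal ideal generated by c^{1/p^N} in R_perf. -/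
/-- Key UFD lemma: if `c` "generates" the colon `(A : B)` in the sense that
`A ∣ x * B ↔ c ∣ x` for all `x`, then for any power `m`, `A ^ m ∣ X * B ^ m`
implies `c ^ m ∣ X`. -/
theorem aux_colon_pow {R : Type*} [CommRing R] [IsDomain R] [UniqueFactorizationMonoid R]
    {A B c : R} (h : ∀ x : R, A ∣ x * B ↔ c ∣ x) (m : ℕ) {X : R}
    (hX : A ^ m ∣ X * B ^ m) : c ^ m ∣ X := by
  rcases eq_or_ne B 0 with rfl | hB0
  · have hcu : IsUnit c := isUnit_of_dvd_one ((h 1).mp (by simp))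
    exact (hcu.pow m).dvd
  rcases eq_or_ne A 0 with rfl | hA0
  · have hc0 : c = 0 := by
      have h1 : (0 : R) ∣ c * B := (h c).mpr dvd_rfl
      have h2 : c * B = 0 := zero_dvd_iff.mp h1
      exact (mul_eq_zero.mp h2).resolve_right hB0
    subst hc0
    rcases Nat.eq_zero_or_pos m with rfl | hm
    · simp
    · have h3 : X * B ^ m = 0 := zero_dvd_iff.mp (by simpa [zero_pow hm.ne'] using hX)
      have hx0 : X = 0 := (mul_eq_zero.mp h3).resolve_right (pow_ne_zero _ hB0)
      simp [hx0]
  · classical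
    letI := UniqueFactorizationMonoid.toGCDMonoid R
    obtain ⟨g, a', b', hga, hgb, hgd⟩ :
        ∃ g a' b' : R, A = g * a' ∧ B = g * b' ∧ ∀ x : R, x ∣ A → x ∣ B → x ∣ g := by
      obtain ⟨a', ha⟩ := gcd_dvd_left A B
      obtain ⟨b', hb⟩ := gcd_dvd_right A B
      exact ⟨gcd A B, a', b', ha, hb, fun x h1 h2 => dvd_gcd h1 h2⟩
    have hg0 : g ≠ 0 := fun e => hA0 (by rw [hga, e, zero_mul])
    have hrel : IsRelPrime a' b' := by
      intro d hda hdb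
      have h1 : g * d ∣ A := by rw [hga]; exact mul_dvd_mul_left _ hda
      have h2 : g * d ∣ B := by rw [hgb]; exact mul_dvd_mul_left _ hdb
      have h3 : g * d ∣ g * 1 := by simpa using hgd _ h1 h2
      exact isUnit_of_dvd_one ((mul_dvd_mul_iff_left hg0).mp h3)
    have hca' : c ∣ a' := (h a').mp ⟨b', by rw [hga, hgb]; ring⟩
    obtain ⟨t, ht⟩ := hX
    have key : g ^ m * (a' ^ m * t) = g ^ m * (X * b' ^ m) := by
      rw [hga, hgb] at ht
      linear_combination -ht
    have hdvd : a' ^ m ∣ X * b' ^ m :=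
      ⟨t, (mul_left_cancel₀ (pow_ne_zero m hg0) key).symm⟩
    have hX' : a' ^ m ∣ X := (hrel.pow).dvd_of_dvd_mul_right hdvd
    exact (pow_dvd_pow_of_dvd hca' m).trans hX'

/-- Let `R` be a UFD of characteristic `p`, `a b` elements of the perfection with
`a^{p^N}, b^{p^N} ∈ R`. If `c` generates `(a^{p^N} R : b^{p^N} R)` in `R`, then
`(a R_perf : b R_perf)` is generated by the `p^N`-th root of `c`. -/
theorem perfectClosure_colon_eq_span_root (R : Type*) [CommRing R] [IsDomain R]
    [UniqueFactorizationMonoid R] (p : ℕ) [Fact p.Prime] [CharP R p]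
    (a b : PerfectClosure R p) (N : ℕ) (A B c : R)
    (hA : PerfectClosure.of R p A = a ^ p ^ N)
    (hB : PerfectClosure.of R p B = b ^ p ^ N)
    (hc : (Ideal.span {A} : Ideal R).colon (Ideal.span {B}) = Ideal.span {c})
    (croot : PerfectClosure R p) (hroot : croot ^ p ^ N = PerfectClosure.of R p c) :
    (Ideal.span {a} : Ideal (PerfectClosure R p)).colon (Ideal.span {b}) =
      Ideal.span {croot} := by
  -- injectivity of `of`
  have hofinj : Function.Injective (PerfectClosure.of R p) := by
    intro x y hxy
    rw [PerfectClosure.of_apply, PerfectClosure.of_apply, PerfectClosure.eq_iff] at hxy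
    simpa using hxy
  -- injectivity of `p^n`-th power map on the perfect closure
  have hinj : ∀ (n : ℕ) (x y : PerfectClosure R p), x ^ p ^ n = y ^ p ^ n → x = y := by
    intro n x y hxy
    apply (injective_frobenius (PerfectClosure R p) p).iterate n
    rwa [iterate_frobenius, iterate_frobenius]
  -- surjectivity of `p^n`-th power map
  have hsurj : ∀ (n : ℕ) (y : PerfectClosure R p), ∃ z, z ^ p ^ n = y := by
    intro n y
    obtain ⟨z, hz⟩ := ((surjective_frobenius (PerfectClosure R p) p).iterate n) y
    exact ⟨z, by rw [← iterate_frobenius]; exact hz⟩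
  -- every element has a `p^n`-th power in `R`
  have hrep : ∀ x : PerfectClosure R p,
      ∃ (n : ℕ) (X : R), x ^ p ^ n = PerfectClosure.of R p X := by
    intro x
    refine PerfectClosure.induction_on x fun y => ⟨y.1, y.2, ?_⟩
    rw [← iterate_frobenius]
    exact PerfectClosure.iterate_frobenius_mk R p y.1 y.2
  -- reformulate `hc`
  have h : ∀ x : R, A ∣ x * B ↔ c ∣ x := by
    intro x
    have h1 : x ∈ (Ideal.span {A} : Ideal R).colon (Ideal.span {B}) ↔
        x ∈ Ideal.span {c} := by rw [hc]
    rwa [Ideal.mem_colon_span_singleton, Ideal.mem_span_singleton,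
      Ideal.mem_span_singleton] at h1
  ext x
  rw [Ideal.mem_colon_span_singleton, Ideal.mem_span_singleton, Ideal.mem_span_singleton]
  constructor
  · rintro ⟨y, hxy⟩
    obtain ⟨n, X0, hX0⟩ := hrep x
    obtain ⟨m', Y0, hY0⟩ := hrep y
    set M := n + m' with hM
    set X : R := X0 ^ p ^ m' with hXdef
    set Y : R := Y0 ^ p ^ n with hYdef
    have hx : x ^ p ^ M = PerfectClosure.of R p X := by
      rw [hM, pow_add, pow_mul, hX0, ← map_pow]
    have hy : y ^ p ^ M = PerfectClosure.of R p Y := by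
      rw [hM, pow_add, mul_comm, pow_mul, hY0, ← map_pow]
    have e1 : (x * b) ^ p ^ (N + M) =
        PerfectClosure.of R p (X ^ p ^ N * B ^ p ^ M) := by
      rw [mul_pow, map_mul]
      congr 1
      · rw [pow_add, mul_comm, pow_mul, hx, ← map_pow]
      · rw [pow_add, pow_mul, ← hB, ← map_pow]
    have e2 : (a * y) ^ p ^ (N + M) =
        PerfectClosure.of R p (A ^ p ^ M * Y ^ p ^ N) := by
      rw [mul_pow, map_mul]
      congr 1
      · rw [pow_add, pow_mul, ← hA, ← map_pow]
      · rw [pow_add, mul_comm, pow_mul, hy, ← map_pow]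
    have eR : X ^ p ^ N * B ^ p ^ M = A ^ p ^ M * Y ^ p ^ N := by
      apply hofinj
      rw [← e1, ← e2, hxy]
    have hc' : c ^ p ^ M ∣ X ^ p ^ N := aux_colon_pow h (p ^ M) ⟨Y ^ p ^ N, eR⟩
    obtain ⟨D, hD⟩ := hc'
    obtain ⟨d, hd⟩ := hsurj (N + M) (PerfectClosure.of R p D)
    refine ⟨d, hinj (N + M) _ _ ?_⟩
    have ex : x ^ p ^ (N + M) =
        PerfectClosure.of R p (c ^ p ^ M) * PerfectClosure.of R p D := by
      rw [pow_add, mul_comm, pow_mul, hx, ← map_pow, hD, map_mul]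
    have ec : (croot * d) ^ p ^ (N + M) =
        PerfectClosure.of R p (c ^ p ^ M) * PerfectClosure.of R p D := by
      rw [mul_pow, hd]
      congr 1
      rw [pow_add, pow_mul, hroot, ← map_pow]
    rw [ex, ec]
  · rintro ⟨d, rfl⟩
    obtain ⟨t, ht⟩ : A ∣ c * B := (h c).mpr dvd_rfl
    obtain ⟨t', ht'⟩ := hsurj N (PerfectClosure.of R p t)
    refine ⟨t' * d, hinj N _ _ ?_⟩
    have hof : PerfectClosure.of R p c * PerfectClosure.of R p B =
        PerfectClosure.of R p A * PerfectClosure.of R p t := by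
      rw [← map_mul, ← map_mul, ht]
    rw [mul_pow, mul_pow, mul_pow, mul_pow, hroot, ← hB, ← hA, ht']
    linear_combination (d ^ p ^ N) * hof
end

section
/- Let R be a reduced commutative ring of prime characteristic p > 0, I ⊆ R an ideal, and define the Frobenius closure I^F = I·R_perf ∩ R (contraction of the extension of I to the perfection). Then I^F = {r ∈ R : r^{p^e} ∈ I^{[p^e]} for some e ≥ 0}, where I^{[p^e]} is the ideal generated by p^e-th powers of elements of I. -/
private lemma frob_mono_lem (R : Type*) [CommRing R] (p : ℕ) [Fact p.Prime]
    [CharP R p] (I : Ideal R) {a : R} {e : ℕ} (f : ℕ)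
    (ha : a ∈ Ideal.map (iterateFrobenius R p e) I) :
    a ^ p ^ f ∈ Ideal.map (iterateFrobenius R p (e + f)) I := by
  rw [add_comm, iterateFrobenius_add, ← Ideal.map_map]
  exact Ideal.mem_map_of_mem _ ha

private lemma mk_pow_self (R : Type*) [CommRing R] (p : ℕ) [Fact p.Prime]
    [CharP R p] (n : ℕ) (x : R) :
    PerfectClosure.mk R p (n, x ^ p ^ n) = PerfectClosure.of R p x := by
  induction n with
  | zero => simp [PerfectClosure.of_apply]
  | succ n ih =>
    rw [pow_succ, pow_mul, ← ih]
    exact PerfectClosure.mk_succ_pow R p n (x ^ p ^ n)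

private lemma root_lem (R : Type*) [CommRing R] (p : ℕ) [Fact p.Prime]
    [CharP R p] (c : PerfectClosure R p) :
    ∃ (f : ℕ) (y : R), c ^ p ^ f = PerfectClosure.of R p y := by
  obtain ⟨⟨f, x⟩, rfl⟩ := PerfectClosure.mk_surjective (K := R) (p := p) c
  refine ⟨f, x, ?_⟩
  rw [PerfectClosure.mk_pow]
  exact mk_pow_self R p f x

/-- For a reduced ring `R` of characteristic `p` and an ideal `I`, the Frobenius
closure `I^F = I·R_perf ∩ R` equals `{r | ∃ e, r^{p^e} ∈ I^{[p^e]}}`. -/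
theorem frobeniusClosure_eq (R : Type*) [CommRing R] (p : ℕ) [Fact p.Prime]
    [CharP R p] [IsReduced R] (I : Ideal R) (r : R) :
    r ∈ Ideal.comap (PerfectClosure.of R p) (Ideal.map (PerfectClosure.of R p) I) ↔
      ∃ e : ℕ, r ^ p ^ e ∈ Ideal.map (iterateFrobenius R p e) I := by
  have hinj : Function.Injective (PerfectClosure.of R p) := fun x y h => by
    simpa using (PerfectClosure.eq_iff R p (0, x) (0, y)).mp h
  rw [Ideal.mem_comap]
  constructor
  · intro hr
    have key : ∀ s ∈ Ideal.map (PerfectClosure.of R p) I,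
        ∃ (e : ℕ) (a : R), a ∈ Ideal.map (iterateFrobenius R p e) I ∧
          s ^ p ^ e = PerfectClosure.of R p a := by
      intro s hs
      refine Submodule.span_induction ?_ ?_ ?_ ?_ hs
      · rintro _ ⟨x, hx, rfl⟩
        refine ⟨0, x, ?_, by rw [pow_zero, pow_one]⟩
        rw [iterateFrobenius_zero, Ideal.map_id]
        exact hx
      · exact ⟨0, 0, by simp, by simp⟩
      · rintro s t _ _ ⟨e, a, ha, hsa⟩ ⟨f, b, hb, htb⟩
        refine ⟨e + f, a ^ p ^ f + b ^ p ^ e, ?_, ?_⟩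
        · have hb' := frob_mono_lem R p I e hb
          rw [add_comm f e] at hb'
          exact Ideal.add_mem _ (frob_mono_lem R p I f ha) hb'
        · rw [add_pow_expChar_pow, map_add, map_pow, map_pow, ← hsa, ← htb,
            ← pow_mul, ← pow_mul, ← pow_add, ← pow_add, add_comm f e]
      · rintro c s _ ⟨e, a, ha, hsa⟩
        obtain ⟨f, y, hc⟩ := root_lem R p c
        refine ⟨e + f, y ^ p ^ e * a ^ p ^ f, Ideal.mul_mem_left _ _ (frob_mono_lem R p I f ha), ?_⟩
        rw [smul_eq_mul, mul_pow, map_mul, map_pow, map_pow, ← hc, ← hsa,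
          ← pow_mul, ← pow_mul, ← pow_add, ← pow_add, add_comm f e]
    obtain ⟨e, a, ha, h⟩ := key _ hr
    have : r ^ p ^ e = a := hinj (by rw [map_pow]; exact h)
    exact ⟨e, this ▸ ha⟩
  · rintro ⟨e, h⟩
    have comm : (PerfectClosure.of R p).comp (iterateFrobenius R p e) =
        (iterateFrobenius (PerfectClosure R p) p e).comp (PerfectClosure.of R p) :=
      RingHom.ext fun x => by simp [iterateFrobenius_def, map_pow]
    have h2 := Ideal.mem_map_of_mem (PerfectClosure.of R p) h
    rw [map_pow] at h2
    rw [Ideal.map_map, comm, ← Ideal.map_map] at h2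
    obtain ⟨s, hsJ, hse⟩ := (Ideal.mem_map_iff_of_surjective _
      (bijective_iterateFrobenius (PerfectClosure R p) p e).surjective).mp h2
    have : s = PerfectClosure.of R p r :=
      (bijective_iterateFrobenius (PerfectClosure R p) p e).injective
        (by rw [hse]; rfl)
    rwa [this] at hsJ
end

section
/- Let p be a prime with p ≡ 1 (mod 5). Then in 𝔽_p[x,y,z,u,v], the coefficient of the monomial (xyzuv)^{p−1} in the expansion of (x^5 + y^5 + z^5 + u^5 + v^5)^{p−1} is nonzero. -/
open MvPolynomial Finset in
lemma prod_X_pow_eq_monomial' {R : Type*} [CommSemiring R] (e : Fin 5 → ℕ) :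
    (∏ i : Fin 5, (X i : MvPolynomial (Fin 5) R) ^ e i) =
      monomial (Finsupp.equivFunOnFinite.symm e) 1 := by
  rw [monomial_eq, C_1, one_mul,
    Finsupp.prod_fintype _ _ (fun i => pow_zero _)]
  rfl

/-- For a prime `p ≡ 1 (mod 5)`, the coefficient of `(xyzuv)^{p-1}` in
`(x^5+y^5+z^5+u^5+v^5)^{p-1}` over `𝔽_p` is nonzero. -/
theorem fedder_coeff_ne_zero (p : ℕ) [Fact p.Prime] (hp : p % 5 = 1) :
    MvPolynomial.coeff (Finsupp.equivFunOnFinite.symm fun _ : Fin 5 => p - 1)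
      ((∑ i : Fin 5, MvPolynomial.X i ^ 5 : MvPolynomial (Fin 5) (ZMod p)) ^ (p - 1))
      ≠ 0 := by
  classical
  have hprime := (Fact.out : p.Prime)
  set k := (p - 1) / 5 with hk
  have hp2 : 2 ≤ p := hprime.two_le
  have h5 : 5 * k = p - 1 := by omega
  rw [Finset.sum_pow_eq_sum_piAntidiag, MvPolynomial.coeff_sum]
  have key : ∀ d ∈ Finset.piAntidiag Finset.univ (p - 1),
      MvPolynomial.coeff (Finsupp.equivFunOnFinite.symm fun _ : Fin 5 => p - 1)
        ((Nat.multinomial Finset.univ d : MvPolynomial (Fin 5) (ZMod p)) *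
          ∏ i : Fin 5, (MvPolynomial.X i ^ 5) ^ d i) =
      if d = (fun _ => k) then (Nat.multinomial Finset.univ d : ZMod p) else 0 := by
    intro d hd
    simp only [← pow_mul]
    rw [prod_X_pow_eq_monomial', ← MvPolynomial.C_eq_coe_nat,
      MvPolynomial.coeff_C_mul, MvPolynomial.coeff_monomial]
    have hiff : (Finsupp.equivFunOnFinite.symm fun i => 5 * d i) =
        (Finsupp.equivFunOnFinite.symm fun _ : Fin 5 => p - 1) ↔ d = fun _ => k := by
      rw [Equiv.apply_eq_iff_eq, funext_iff, funext_iff]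
      constructor
      · intro h i; have := h i; omega
      · intro h i; have := h i; omega
    by_cases hcase : d = fun _ => k
    · rw [if_pos (hiff.mpr hcase), if_pos hcase, mul_one]
    · rw [if_neg (fun h => hcase (hiff.mp h)), if_neg hcase, mul_zero]
  rw [Finset.sum_congr rfl key, Finset.sum_ite_eq' _ _
    (fun d => (Nat.multinomial Finset.univ d : ZMod p)), if_pos]
  · intro h
    have hdvd : p ∣ Nat.multinomial Finset.univ (fun _ : Fin 5 => k) :=
      (ZMod.natCast_eq_zero_iff _ _).mp h
    have hdvd' : p ∣ Nat.factorial (∑ _i : Fin 5, k) := by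
      rw [← Nat.multinomial_spec]
      exact hdvd.mul_left _
    have hsum : (∑ _i : Fin 5, k) = p - 1 := by
      simp [Finset.sum_const]; omega
    rw [hsum] at hdvd'
    have := (Nat.Prime.dvd_factorial hprime).mp hdvd'
    omega
  · simp only [Finset.mem_piAntidiag]
    refine ⟨?_, fun i _ => Finset.mem_univ i⟩
    simp [Finset.sum_const]; omega
end

section
/- Let A = 𝔽_p[x,y,z,u,v]/(x^5+y^5+z^5+u^5+v^5) with p ≠ 5. Then x^4 lies in the tight closure of the ideal I = (y,z,u,v): there exists a nonzero c ∈ A with c·(x^4)^{p^e} ∈ I^{[p^e]} for all e ≥ 0. -/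
/-!
Take `c = x`. Since `x⁵ = -(y⁵ + z⁵ + u⁵ + v⁵)` in `A`, the element `x · x^{4q} = x^{4q+1}` is a
multiple of `(y⁵ + z⁵ + u⁵ + v⁵)^m` as soon as `5m ≤ 4q + 1`; for the largest such `m`, every monomial
of this power has some exponent `≥ q` by pigeonhole, so it lies in `(y^q, z^q, u^q, v^q)`.
And `x ≠ 0` in `A` because the point `(1, 0, 0, 0, -1)` lies on the hypersurface.
-/

open MvPolynomial

theorem Ideal.Quotient.mk_span_singleton_ne_zero {R S : Type*} [CommRing R] [Semiring S]
    (φ : R →+* S) {f g : R} (hg : φ g = 0) (hf : φ f ≠ 0) :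
    Ideal.Quotient.mk (Ideal.span {g}) f ≠ 0 := by
  rw [Ne, Ideal.Quotient.eq_zero_iff_mem, Ideal.mem_span_singleton']
  rintro ⟨a, rfl⟩
  simp [hg] at hf

theorem Ideal.sum_pow_pow_mem_span_range_pow {R ι : Type*} [CommRing R] [Fintype ι] (y : ι → R)
    {d N q : ℕ} (hq : q ≤ d * (N + 1)) :
    (∑ i, y i ^ d) ^ (Fintype.card ι * N + 1) ∈ Ideal.span (Set.range fun i => y i ^ q) := by
  have h := Ideal.sum_pow_mem_span_pow Finset.univ (fun i => y i ^ d) N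
  rw [Finset.card_univ, Finset.coe_univ, Set.image_univ] at h
  refine Ideal.span_le.2 (Set.range_subset_iff.2 fun i => ?_) h
  rw [← pow_mul]
  exact Ideal.pow_mem_of_pow_mem _ (Ideal.subset_span ⟨i, rfl⟩) hq

theorem mul_pow_pow_mem_span_of_add_sum_pow_eq_zero {R ι : Type*} [CommRing R] [Fintype ι]
    {n : ℕ} (hι : Fintype.card ι = n) {x : R} {y : ι → R}
    (hxy : x ^ (n + 1) + ∑ i, y i ^ (n + 1) = 0) {q : ℕ} (hq : 0 < q) :
    x * (x ^ n) ^ q ∈ Ideal.span (Set.range fun i => y i ^ q) := by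
  -- Writing `q - 1 = (n + 1) N + j` gives `(n + 1) (n N + 1) ≤ n q + 1` and `q ≤ (n + 1) (N + 1)`.
  obtain ⟨N, j, hj, rfl⟩ : ∃ N j, j ≤ n ∧ q = (n + 1) * N + j + 1 :=
    ⟨(q - 1) / (n + 1), (q - 1) % (n + 1), Nat.lt_succ_iff.1 (Nat.mod_lt _ n.succ_pos),
      by have := Nat.div_add_mod (q - 1) (n + 1); omega⟩
  have hsum := Ideal.sum_pow_pow_mem_span_range_pow y (d := n + 1) (N := N)
    (q := (n + 1) * N + j + 1) (by rw [Nat.mul_succ]; omega)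
  rw [hι] at hsum
  have hx : x * (x ^ n) ^ ((n + 1) * N + j + 1) =
      (-1) ^ (n * N + 1) * (∑ i, y i ^ (n + 1)) ^ (n * N + 1) * x ^ (n * j) :=
    calc x * (x ^ n) ^ ((n + 1) * N + j + 1) = (x ^ (n + 1)) ^ (n * N + 1) * x ^ (n * j) := by
          ring
      _ = _ := by rw [eq_neg_of_add_eq_zero_left hxy, neg_pow]
  rw [hx]
  exact Ideal.mul_mem_right _ _ (Ideal.mul_mem_left _ _ hsum)

theorem x4_mem_tightClosure_general (p : ℕ) [Fact p.Prime] :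
    ∃ c : MvPolynomial (Fin 5) (ZMod p) ⧸
        (Ideal.span {∑ i : Fin 5, X i ^ 5} : Ideal (MvPolynomial (Fin 5) (ZMod p))),
      c ≠ 0 ∧ ∀ e : ℕ,
        c * (Ideal.Quotient.mk _ (X 0) ^ 4) ^ p ^ e ∈
          Ideal.span {Ideal.Quotient.mk _ (X 1) ^ p ^ e,
            Ideal.Quotient.mk _ (X 2) ^ p ^ e,
            Ideal.Quotient.mk _ (X 3) ^ p ^ e,
            Ideal.Quotient.mk _ (X 4) ^ p ^ e} := by
  set mk := Ideal.Quotient.mk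
    (Ideal.span {∑ i : Fin 5, X i ^ 5} : Ideal (MvPolynomial (Fin 5) (ZMod p)))
  refine ⟨mk (X 0), ?_, fun e => ?_⟩
  · exact Ideal.Quotient.mk_span_singleton_ne_zero (eval ![1, 0, 0, 0, -1])
      (by simp [Fin.sum_univ_five]; norm_num) (by simp)
  · have hrel : mk (X 0) ^ (4 + 1) + ∑ i : Fin 4, mk (X i.succ) ^ (4 + 1) = 0 := by
      have h := Ideal.Quotient.mk_singleton_self (∑ i : Fin 5, X i ^ 5 :
        MvPolynomial (Fin 5) (ZMod p))
      rw [map_sum] at h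
      simpa only [map_pow, Fin.sum_univ_succ (n := 4)] using h
    refine Ideal.span_mono ?_ (mul_pow_pow_mem_span_of_add_sum_pow_eq_zero (Fintype.card_fin 4)
      hrel (pow_pos (Fact.out : p.Prime).pos e))
    rintro _ ⟨i, rfl⟩
    fin_cases i <;> simp

open MvPolynomial in
/-- In `A = 𝔽_p[x,y,z,u,v]/(x^5+y^5+z^5+u^5+v^5)` with `p ≠ 5`, the element `x^4`
lies in the tight closure of `I = (y,z,u,v)`: there is a nonzero `c` with
`c·(x^4)^{p^e} ∈ I^{[p^e]} = (y^{p^e}, z^{p^e}, u^{p^e}, v^{p^e})` for all `e`. -/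
theorem x4_mem_tightClosure (p : ℕ) [Fact p.Prime] (hp5 : p ≠ 5) :
    ∃ c : MvPolynomial (Fin 5) (ZMod p) ⧸
        (Ideal.span {∑ i : Fin 5, X i ^ 5} : Ideal (MvPolynomial (Fin 5) (ZMod p))),
      c ≠ 0 ∧ ∀ e : ℕ,
        c * (Ideal.Quotient.mk _ (X 0) ^ 4) ^ p ^ e ∈
          Ideal.span {Ideal.Quotient.mk _ (X 1) ^ p ^ e,
            Ideal.Quotient.mk _ (X 2) ^ p ^ e,
            Ideal.Quotient.mk _ (X 3) ^ p ^ e,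
            Ideal.Quotient.mk _ (X 4) ^ p ^ e} :=
  x4_mem_tightClosure_general p
end

section
/- Let R be a regular local ring of prime characteristic p > 0 (more generally, a ring in which Frobenius is flat). Then for any ideals I, J ⊆ R and any e ≥ 0, (I : J)^{[p^e]} = (I^{[p^e]} : J^{[p^e]}). -/
/-!
By the equational criterion, a linear relation `∑ f(aᵢ) xᵢ = 0` over a flat ring map
`f : R → S` is a combination of relations already holding in `R`. Applied to
`s f(b) = ∑ f(aᵢ) tᵢ` with `aᵢ ∈ I` this gives `(I : b) S = (IS : f(b))`, and applied to two
expressions of an element of `IS ∩ I'S` it gives `(I ∩ I') S = IS ∩ I'S`. For `J` generated by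
finitely many `b`, `(I : J)` is the intersection of the `(I : b)`, so flat base change commutes
with `(I : J)`; Frobenius powers are base change along `Fⁿ`, which is flat when `F` is.
-/

namespace RingHom.Flat

variable {R S : Type*} [CommRing R] [CommRing S] {f : R →+* S}

lemma isTrivialRelation_of_sum_mul_eq_zero (hf : f.Flat) {ι : Type*} [Fintype ι]
    {a : ι → R} {x : ι → S} (h : ∑ i, f (a i) * x i = 0) :
    ∃ (k : ℕ) (α : ι → Fin k → R) (y : Fin k → S),
      (∀ i, x i = ∑ j, f (α i j) * y j) ∧ ∀ j, ∑ i, a i * α i j = 0 := by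
  algebraize [f]
  exact Module.Flat.isTrivialRelation_of_sum_smul_eq_zero (f := a) h

lemma pow {f : R →+* R} (hf : f.Flat) (n : ℕ) : (f ^ n).Flat := by
  induction n with
  | zero => exact RingHom.Flat.id R
  | succ n ih => rw [pow_succ]; exact hf.comp ih

end RingHom.Flat

namespace Ideal

variable {R S : Type*} [CommRing R] [CommRing S] {f : R →+* S}

lemma exists_sum_eq_of_mem_map {I : Ideal R} {s : S} (hs : s ∈ I.map f) :
    ∃ (t : Finset R) (c : t → S), (↑t ⊆ (I : Set R)) ∧ s = ∑ i : t, f i * c i := by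
  obtain ⟨t, ht, c, rfl⟩ := (Submodule.mem_span_image_iff_exists_fun S).mp hs
  exact ⟨t, c, ht, Finset.sum_congr rfl fun i _ ↦ mul_comm _ _⟩

lemma map_colon_singleton_of_flat (hf : f.Flat) (I : Ideal R) (b : R) :
    (I.colon {b}).map f = (I.map f).colon {f b} := by
  refine le_antisymm (map_le_iff_le_comap.mpr fun r hr ↦ ?_) fun s hs ↦ ?_
  · simpa using mem_map_of_mem f (Submodule.mem_colon_singleton.mp hr)
  obtain ⟨t, c, ht, hsum⟩ := exists_sum_eq_of_mem_map (smul_eq_mul s (f b) ▸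
    Submodule.mem_colon_singleton.mp hs)
  have hrel : ∑ i : Option t, f (i.elim b fun i ↦ -i) * i.elim s c = 0 := by
    simp only [Fintype.sum_option, Option.elim, map_neg, neg_mul, Finset.sum_neg_distrib]
    linear_combination hsum
  obtain ⟨k, α, y, hx, hα⟩ := hf.isTrivialRelation_of_sum_mul_eq_zero hrel
  have hαI : ∀ j, α none j ∈ I.colon {b} := by
    intro j
    have hj : α none j * b = ∑ i : t, (i : R) * α (some i) j := by
      have := hα j
      simp only [Fintype.sum_option, Option.elim, neg_mul, Finset.sum_neg_distrib] at this
      linear_combination this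
    rw [Submodule.mem_colon_singleton, smul_eq_mul, hj]
    exact sum_mem _ fun i _ ↦ mul_mem_right _ _ (ht i.2)
  rw [show s = _ from hx none]
  exact sum_mem _ fun j _ ↦ mul_mem_right _ _ (mem_map_of_mem f (hαI j))

lemma map_inf_of_flat (hf : f.Flat) (I I' : Ideal R) :
    (I ⊓ I').map f = I.map f ⊓ I'.map f := by
  refine le_antisymm (map_inf_le f) fun s ⟨hs, hs'⟩ ↦ ?_
  obtain ⟨t, c, ht, rfl⟩ := exists_sum_eq_of_mem_map hs
  obtain ⟨t', c', ht', hsum⟩ := exists_sum_eq_of_mem_map hs'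
  have hrel :
      ∑ i : t ⊕ t', f (i.elim (fun i : t ↦ (i : R)) fun i : t' ↦ -(i : R)) * i.elim c c' = 0 := by
    simp only [Fintype.sum_sum_type, Sum.elim_inl, Sum.elim_inr, map_neg, neg_mul,
      Finset.sum_neg_distrib]
    linear_combination hsum
  obtain ⟨k, α, y, hx, hα⟩ := hf.isTrivialRelation_of_sum_mul_eq_zero hrel
  set d : Fin k → R := fun j ↦ ∑ i : t, (i : R) * α (.inl i) j
  have hdI : ∀ j, d j ∈ I := fun j ↦ sum_mem _ fun i _ ↦ mul_mem_right _ _ (ht i.2)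
  have hdI' : ∀ j, d j ∈ I' := by
    intro j
    have hj : d j = ∑ i : t', (i : R) * α (.inr i) j := by
      have := hα j
      simp only [Fintype.sum_sum_type, Sum.elim_inl, Sum.elim_inr, neg_mul,
        Finset.sum_neg_distrib] at this
      linear_combination this
    rw [hj]
    exact sum_mem _ fun i _ ↦ mul_mem_right _ _ (ht' i.2)
  have hs : ∑ i : t, f i * c i = ∑ j, f (d j) * y j := by
    have hc : ∀ i, c i = ∑ j, f (α (.inl i) j) * y j := fun i ↦ hx (.inl i)
    simp only [hc, d, map_sum, map_mul, Finset.mul_sum, Finset.sum_mul]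
    rw [Finset.sum_comm]
    exact Finset.sum_congr rfl fun j _ ↦ Finset.sum_congr rfl fun i _ ↦ by ring
  rw [hs]
  exact sum_mem _ fun j _ ↦ mul_mem_right _ _ (mem_map_of_mem f ⟨hdI j, hdI' j⟩)

lemma map_colon_finset_of_flat (hf : f.Flat) (I : Ideal R) (B : Finset R) :
    (I.colon (B : Set R)).map f = (I.map f).colon (f '' B) := by
  classical
  induction B using Finset.induction_on with
  | empty => simp [map_top]
  | insert b B _ ih =>
    rw [Finset.coe_insert, Set.image_insert_eq, Set.insert_eq, Set.insert_eq,
      Submodule.colon_union, Submodule.colon_union, map_inf_of_flat hf,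
      map_colon_singleton_of_flat hf, ih]

lemma map_colon_of_flat (hf : f.Flat) (I : Ideal R) {J : Ideal R} (hJ : J.FG) :
    (I.colon J).map f = (I.map f).colon (J.map f) := by
  obtain ⟨B, rfl⟩ := hJ
  rw [map_span, colon_span, colon_span, map_colon_finset_of_flat hf]

end Ideal

theorem frobenius_power_colon_general (R : Type*) [CommRing R] [IsNoetherianRing R]
    (p : ℕ) [Fact p.Prime] [CharP R p]
    (hflat : (frobenius R p).Flat) (I J : Ideal R) (e : ℕ) :
    Ideal.map (iterateFrobenius R p e) (I.colon J) =
      (Ideal.map (iterateFrobenius R p e) I).colon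
        (Ideal.map (iterateFrobenius R p e) J) := by
  rw [iterateFrobenius_eq_pow]
  exact Ideal.map_colon_of_flat (hflat.pow e) I (IsNoetherian.noetherian J)

/-- If Frobenius is flat on a Noetherian ring `R` of characteristic `p` (e.g. `R`
regular local, by Kunz's theorem), then Frobenius powers commute with colon
ideals: `(I : J)^{[p^e]} = (I^{[p^e]} : J^{[p^e]})`. -/
theorem frobenius_power_colon (R : Type*) [CommRing R] [IsNoetherianRing R]
    [IsLocalRing R] (p : ℕ) [Fact p.Prime] [CharP R p]
    (hflat : (frobenius R p).Flat) (I J : Ideal R) (e : ℕ) :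
    Ideal.map (iterateFrobenius R p e) (I.colon J) =
      (Ideal.map (iterateFrobenius R p e) I).colon
        (Ideal.map (iterateFrobenius R p e) J) :=
  frobenius_power_colon_general R p hflat I J e
end
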